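/- arXiv:1906.10078 — 4 statements merged into one kernel-verified Lean document; each statement's English description precedes it below -/
import Mathlib

section
/- Let G be a finite universal-edged graph with an edge {ℓ, r}, and let M = N(ℓ) ∩ N(r) be the set of common neighbors of ℓ and r. Then for every k ≥ 2, G is k-colorable if and only if the induced subgraph G[M] is (k−2)-colorable. -/
def UniversalEdged {V : Type*} (G : SimpleGraph V) : Prop :=
  ∀ u v, G.Adj u v → ∀ x, x ≠ u → x ≠ v → G.Adj x u ∨ G.Adj x v

set_option maxHeartbeats 2000000 in
theorem universalEdged_colorable_iff_common_nbrs {V : Type*} [Fintype V]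
    (G : SimpleGraph V) (hG : UniversalEdged G) (l r : V) (hlr : G.Adj l r)
    (k : ℕ) (hk : 2 ≤ k) :
    G.Colorable k ↔
      (G.induce {w | G.Adj l w ∧ G.Adj r w}).Colorable (k - 2) := by
  constructor
  · rintro ⟨C⟩
    have hne : C l ≠ C r := C.valid hlr
    have hcard : Fintype.card {c : Fin k // c ≠ C l ∧ c ≠ C r} = k - 2 := by
      classical
      rw [Fintype.card_subtype]
      have : (Finset.univ.filter (fun c : Fin k => c ≠ C l ∧ c ≠ C r))
          = Finset.univ \ {C l, C r} := by
        ext c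
        simp [and_comm]
      rw [this, Finset.card_sdiff_of_subset (by simp), Finset.card_pair hne]
      simp
    have hcol : (G.induce {w | G.Adj l w ∧ G.Adj r w}).Colorable
        (Fintype.card {c : Fin k // c ≠ C l ∧ c ≠ C r}) := by
      refine SimpleGraph.Coloring.colorable
        (SimpleGraph.Coloring.mk
          (fun w => ⟨C w.1, (C.valid w.2.1).symm, (C.valid w.2.2).symm⟩) ?_)
      intro v w hvw h
      exact C.valid hvw (by simpa using congrArg Subtype.val h)
    rwa [hcard] at hcol
  · rintro ⟨C⟩
    classical
    have hk0 : 0 < k := by omega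
    have hle : k - 2 ≤ k := by omega
    set a : Fin k := ⟨k - 2, by omega⟩ with ha
    set b : Fin k := ⟨k - 1, by omega⟩ with hb
    set f : V → Fin k := fun x =>
      if x = l then a else if x = r then b
      else if h : G.Adj l x ∧ G.Adj r x then Fin.castLE hle (C ⟨x, h⟩)
      else if G.Adj l x then b else a with hf
    refine ⟨SimpleGraph.Coloring.mk f ?_⟩
    intro v w hvw
    have hvwne : v ≠ w := G.ne_of_adj hvw
    have hcastlt : ∀ (z : {w : V // G.Adj l w ∧ G.Adj r w}),
        ((Fin.castLE hle (C z)) : Fin k).val < k - 2 := fun z => (C z).isLt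
    have hLind : ∀ x y, x ≠ r → y ≠ r → ¬G.Adj r x → ¬G.Adj r y →
        ¬G.Adj x y := by
      intro x y hx hy hrx hry hadj
      rcases hG x y hadj r hx.symm hy.symm with h | h
      · exact hrx h
      · exact hry h
    have hRind : ∀ x y, x ≠ l → y ≠ l → ¬G.Adj l x → ¬G.Adj l y →
        ¬G.Adj x y := by
      intro x y hx hy hlx hly hadj
      rcases hG x y hadj l hx.symm hy.symm with h | h
      · exact hlx h
      · exact hly h
    have hab : a ≠ b := by
      apply Fin.ne_of_val_ne
      show k - 2 ≠ k - 1
      omega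
    have hca : ∀ (z : {w : V // G.Adj l w ∧ G.Adj r w}),
        Fin.castLE hle (C z) ≠ a := by
      intro z h
      have h2 := congrArg Fin.val h
      simp only [Fin.coe_castLE, ha] at h2
      have := (C z).isLt
      omega
    have hcb : ∀ (z : {w : V // G.Adj l w ∧ G.Adj r w}),
        Fin.castLE hle (C z) ≠ b := by
      intro z h
      have h2 := congrArg Fin.val h
      simp only [Fin.coe_castLE, hb] at h2
      have := (C z).isLt
      omega
    have hvw2 := hvw.symm
    simp only [hf]
    split_ifs <;> subst_vars <;>
      first
        | exact hab
        | exact hab.symm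
        | exact hca _
        | exact (hca _).symm
        | exact hcb _
        | exact (hcb _).symm
        | (intro h; exact C.valid (by simpa using hvw) (Fin.castLE_injective hle h))
        | exact absurd hvw (G.irrefl)
        | tauto
        | (exfalso; refine hLind v w ?_ ?_ ?_ ?_ hvw <;> tauto)
        | (exfalso; refine hRind v w ?_ ?_ ?_ ?_ hvw <;> tauto)
end

section
/- Let G be a finite universal-edged graph with an edge {ℓ, r}. Then L ∪ {r} is an independent set, where L = N(ℓ) \ N[r]. -/
theorem universalEdged_L_union_r_indep {V : Type*} [Fintype V]
    (G : SimpleGraph V) (hG : UniversalEdged G) (l r : V) (hlr : G.Adj l r) :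
    ∀ x ∈ {w | G.Adj l w ∧ ¬ G.Adj r w ∧ w ≠ r} ∪ {r},
      ∀ y ∈ {w | G.Adj l w ∧ ¬ G.Adj r w ∧ w ≠ r} ∪ {r},
        ¬ G.Adj x y := by
  rintro x (⟨hx1, hx2, hx3⟩ | hx) y (⟨hy1, hy2, hy3⟩ | hy) hxy
  · rcases hG x y hxy r hx3.symm hy3.symm with h | h
    · exact hx2 h
    · exact hy2 h
  · simp only [Set.mem_singleton_iff] at hy; subst hy
    exact hx2 hxy.symm
  · simp only [Set.mem_singleton_iff] at hx; subst hx
    exact hy2 hxy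
  · simp only [Set.mem_singleton_iff] at hx hy; subst hx; subst hy
    exact G.irrefl hxy
end

section
/- Let Φ be a CNF formula in which no clause contains both a variable and its negation, with clauses C₁,…,C_m over variables x₁,…,x_n. Introduce new variables y₁,…,y_m and let π_i denote the disjunction of all y_j with j ≠ i. Define Ψ as the conjunction of: (C_i ∨ π_i) for each i; (¬ℓ ∨ π_i ∨ ¬y_i) for each i and each literal ℓ of C_i; and (¬y_i ∨ ¬y_j) for all i < j. Then Φ is satisfiable if and only if Ψ is satisfiable. -/
/-- The Papadimitriou–Wolfe construction: `Φ` has `m` clauses, clause `i` having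
`L i` literals, the `j`-th literal of clause `i` being the pair `lit i j` of a
variable and a polarity. `Ψ` is a formula over the variables `V ⊕ Fin m`
(the original variables plus the fresh variables `y₁,…,y_m`); `π i` is the
disjunction of all `y k` with `k ≠ i`. The hypothesis `hnc` says that no clause
contains both a variable and its negation. Conclusion: `Φ` is satisfiable iff
`Ψ` is satisfiable, where the clauses of `Ψ` are `(Cᵢ ∨ πᵢ)`,
`(¬ℓ ∨ πᵢ ∨ ¬yᵢ)` for each literal `ℓ` of `Cᵢ`, and `(¬yᵢ ∨ ¬yⱼ)` for `i < j`. -/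
theorem papadimitriou_wolfe_equisat {V : Type*} (m : ℕ) (L : Fin m → ℕ)
    (lit : (i : Fin m) → Fin (L i) → V × Bool)
    (hnc : ∀ i j j', (lit i j).1 = (lit i j').1 → (lit i j).2 = (lit i j').2) :
    (∃ α : V → Bool, ∀ i, ∃ j, α (lit i j).1 = (lit i j).2) ↔
    (∃ β : (V ⊕ Fin m) → Bool,
      (∀ i, (∃ j, β (Sum.inl (lit i j).1) = (lit i j).2) ∨
            (∃ k, k ≠ i ∧ β (Sum.inr k) = true)) ∧
      (∀ i (j : Fin (L i)),
            β (Sum.inl (lit i j).1) = !(lit i j).2 ∨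
            (∃ k, k ≠ i ∧ β (Sum.inr k) = true) ∨
            β (Sum.inr i) = false) ∧
      (∀ i j : Fin m, i < j →
            β (Sum.inr i) = false ∨ β (Sum.inr j) = false)) := by
  constructor
  · rintro ⟨α, hα⟩
    refine ⟨Sum.elim α (fun _ => false), fun i => Or.inl (hα i), fun i j => Or.inr (Or.inr rfl),
      fun i j _ => Or.inl rfl⟩
  · rintro ⟨β, h1, h2, h3⟩
    by_cases hy : ∀ k : Fin m, β (Sum.inr k) = false
    · refine ⟨fun v => β (Sum.inl v), fun i => ?_⟩
      rcases h1 i with h | ⟨k, _, hk⟩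
      · exact h
      · simp [hy k] at hk
    · push_neg at hy
      obtain ⟨i, hi⟩ := hy
      replace hi : β (Sum.inr i) = true := by simpa using hi
      -- all other y's are false
      have hother : ∀ k, k ≠ i → β (Sum.inr k) = false := by
        intro k hk
        rcases lt_or_gt_of_ne hk with h | h
        · rcases h3 k i h with h' | h'
          · exact h'
          · rw [hi] at h'; exact absurd h' (by simp)
        · rcases h3 i k h with h' | h'
          · rw [hi] at h'; exact absurd h' (by simp)
          · exact h'
      have hnopi : ¬ ∃ k, k ≠ i ∧ β (Sum.inr k) = true := by
        rintro ⟨k, hk, hk'⟩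
        rw [hother k hk] at hk'; exact absurd hk' (by simp)
      rcases h1 i with ⟨j, hj⟩ | hpi
      · rcases h2 i j with h' | h' | h'
        · rw [hj] at h'
          exact absurd h' (by cases (lit i j).2 <;> simp)
        · exact absurd h' hnopi
        · rw [hi] at h'; exact absurd h' (by simp)
      · exact absurd hpi hnopi
end

section
/- Let G and H be finite graphs on disjoint vertex sets of equal size n+1 with β(G) = β(H), and let F = G + H be their join. Then for every vertex v of F, β(F − v) = β(F) − 1; that is, F is β-vertex-critical. -/
/-!
A vertex cover of `G + H` must contain all of one side, since every vertex of `G` is adjacent to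
every vertex of `H`; hence `β(G + H) = min (|V| + β(H)) (|W| + β(G))`, which is `(n + 1) + β(G)`
under the hypotheses. For a vertex `v` of `G` (symmetrically for `H`), the cover consisting of all of `V` together with a
minimum cover of `H` has this size and contains `v`, so removing `v` from it covers `F - v`; thus
`β(F - v) ≤ β(F) - 1`, and deleting a single vertex never lowers `β` by more than one.
-/

def graphJoin {V W : Type*} (G : SimpleGraph V) (H : SimpleGraph W) :
    SimpleGraph (V ⊕ W) where
  Adj x y :=
    match x, y with
    | Sum.inl a, Sum.inl b => G.Adj a b
    | Sum.inr a, Sum.inr b => H.Adj a b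
    | _, _ => True
  symm := ⟨by rintro (a | a) (b | b) h <;> first | exact h.symm | trivial⟩
  loopless := ⟨by rintro (a | a) h <;> first | exact G.loopless.irrefl a h | exact H.loopless.irrefl a h⟩

def IsVertexCover {V : Type*} (G : SimpleGraph V) (C : Finset V) : Prop :=
  ∀ ⦃u v : V⦄, G.Adj u v → u ∈ C ∨ v ∈ C

noncomputable def vcNum {V : Type*} [Fintype V] (G : SimpleGraph V) : ℕ :=
  sInf {n | ∃ C : Finset V, IsVertexCover G C ∧ C.card = n}

open Finset

section vcNum

variable {V : Type*} [Fintype V] {G : SimpleGraph V}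

lemma vcNum_le_card {C : Finset V} (hC : IsVertexCover G C) : vcNum G ≤ C.card :=
  Nat.sInf_le ⟨C, hC, rfl⟩

variable (G) in
lemma exists_isVertexCover_card_eq_vcNum :
    ∃ C : Finset V, IsVertexCover G C ∧ C.card = vcNum G :=
  Nat.sInf_mem (s := {n | ∃ C : Finset V, IsVertexCover G C ∧ C.card = n})
    ⟨univ.card, univ, fun u _ _ => Or.inl (mem_univ u), rfl⟩

variable [DecidableEq V]

lemma vcNum_induce_ne_add_one_le_card {C : Finset V} (hC : IsVertexCover G C) {v : V}
    (hv : v ∈ C) : vcNum (G.induce {w | w ≠ v}) + 1 ≤ C.card := by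
  have hcov : IsVertexCover (G.induce {w | w ≠ v}) (C.subtype (· ∈ {w | w ≠ v})) :=
    fun a b hab => by simpa using hC hab
  have hcard : (C.subtype (· ∈ {w | w ≠ v})).card + 1 = C.card := by
    rw [card_subtype, ← card_erase_add_one hv]
    simp only [Set.mem_ofPred_eq, filter_ne']
  exact hcard ▸ Nat.add_le_add_right (vcNum_le_card hcov) 1

variable (G) in
lemma vcNum_le_vcNum_induce_ne_add_one (v : V) :
    vcNum G ≤ vcNum (G.induce {w | w ≠ v}) + 1 := by
  obtain ⟨C, hC, hcard⟩ := exists_isVertexCover_card_eq_vcNum (G.induce {w | w ≠ v})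
  have hcov : IsVertexCover G (insert v (C.map (Function.Embedding.subtype _))) := by
    intro a b hab
    by_cases ha : a = v
    · simp [ha]
    by_cases hb : b = v
    · simp [hb]
    have : (G.induce {w | w ≠ v}).Adj ⟨a, ha⟩ ⟨b, hb⟩ := hab
    simpa [ha, hb] using hC this
  calc vcNum G ≤ _ := vcNum_le_card hcov
    _ ≤ (C.map (Function.Embedding.subtype _)).card + 1 := card_insert_le _ _
    _ = _ := by rw [card_map, hcard]

end vcNum

section graphJoin

variable {V W : Type*} {G : SimpleGraph V} {H : SimpleGraph W}

lemma IsVertexCover.graphJoin_disjSum_univ [Fintype W] {C : Finset V}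
    (hC : IsVertexCover G C) : IsVertexCover (graphJoin G H) (C.disjSum univ) := by
  rintro (u | u) (v | v) h
  · simpa using hC h
  all_goals simp

lemma IsVertexCover.graphJoin_univ_disjSum [Fintype V] {D : Finset W}
    (hD : IsVertexCover H D) : IsVertexCover (graphJoin G H) (univ.disjSum D) := by
  rintro (u | u) (v | v) h
  case inr.inr => simpa using hD h
  all_goals simp

namespace IsVertexCover

variable {C : Finset (V ⊕ W)} (hC : IsVertexCover (graphJoin G H) C)
include hC

lemma toLeft_of_graphJoin : IsVertexCover G C.toLeft := fun u v h => by
  simpa using hC (u := .inl u) (v := .inl v) h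

lemma toRight_of_graphJoin : IsVertexCover H C.toRight := fun u v h => by
  simpa using hC (u := .inr u) (v := .inr v) h

lemma graphJoin_left_or_right : (∀ x, Sum.inl x ∈ C) ∨ ∀ y, Sum.inr y ∈ C := by
  by_contra! h
  obtain ⟨⟨x, hx⟩, ⟨y, hy⟩⟩ := h
  exact (hC (u := .inl x) (v := .inr y) trivial).elim hx hy

end IsVertexCover

lemma vcNum_graphJoin [Fintype V] [Fintype W] :
    vcNum (graphJoin G H) = min (Fintype.card V + vcNum H) (Fintype.card W + vcNum G) := by
  obtain ⟨CG, hCG, hCGcard⟩ := exists_isVertexCover_card_eq_vcNum G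
  obtain ⟨CH, hCH, hCHcard⟩ := exists_isVertexCover_card_eq_vcNum H
  obtain ⟨C, hC, hCcard⟩ := exists_isVertexCover_card_eq_vcNum (graphJoin G H)
  refine le_antisymm (le_min ?_ ?_) ?_
  · simpa [hCHcard] using vcNum_le_card (hCH.graphJoin_univ_disjSum (G := G))
  · simpa [hCGcard, add_comm] using vcNum_le_card (hCG.graphJoin_disjSum_univ (H := H))
  rw [← hCcard, ← card_toLeft_add_card_toRight]
  have hG := vcNum_le_card hC.toLeft_of_graphJoin
  have hH := vcNum_le_card hC.toRight_of_graphJoin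
  rcases hC.graphJoin_left_or_right with hleft | hright
  · have : C.toLeft = univ := eq_univ_of_forall (by simpa using hleft)
    rw [this, card_univ]
    omega
  · have : C.toRight = univ := eq_univ_of_forall (by simpa using hright)
    rw [this, card_univ]
    omega

end graphJoin

theorem graphJoin_vertexCritical {V W : Type*} [Fintype V] [Fintype W]
    [DecidableEq V] [DecidableEq W] (n : ℕ)
    (hV : Fintype.card V = n + 1) (hW : Fintype.card W = n + 1)
    (G : SimpleGraph V) (H : SimpleGraph W) (hβ : vcNum G = vcNum H) :
    ∀ v : V ⊕ W,
      vcNum ((graphJoin G H).induce {w | w ≠ v}) = vcNum (graphJoin G H) - 1 := by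
  intro v
  have hF : vcNum (graphJoin G H) = n + 1 + vcNum G := by
    rw [vcNum_graphJoin, hV, hW, ← hβ, min_self]
  obtain ⟨CG, hCG, hCGcard⟩ := exists_isVertexCover_card_eq_vcNum G
  obtain ⟨CH, hCH, hCHcard⟩ := exists_isVertexCover_card_eq_vcNum H
  obtain ⟨C, hC, hv, hCcard⟩ : ∃ C, IsVertexCover (graphJoin G H) C ∧ v ∈ C ∧
      C.card = n + 1 + vcNum G := by
    rcases v with a | b
    · exact ⟨_, hCH.graphJoin_univ_disjSum, by simp, by simp [hV, hCHcard, hβ]⟩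
    · exact ⟨_, hCG.graphJoin_disjSum_univ, by simp, by simp [hW, hCGcard, add_comm]⟩
  have hle := vcNum_induce_ne_add_one_le_card hC hv
  have hge := vcNum_le_vcNum_induce_ne_add_one (graphJoin G H) v
  omega
end
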